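/- Let C(z) = d + ∑_{k≥1} x(k)/(2t)^k · (−z)^{k+1}, where x(k) is the closed-form character sequence x(k) = −αβγ(2t)^k/((2t−α)(2t−β)(2t−γ)) + t^k/2 + c_α α^k + c_β β^k + c_γ γ^k and d = (α−2t)(β−2t)(γ−2t)/(αβγ). Then, as a formal power series, C(z) = d + z²·(96t³ + 168t³z + 6(14t³ + t·t₂ − t₃)z² + (13t³ + 3t·t₂ − 4t₃)z³)/(6(2t+αz)(2t+βz)(2t+γz)(2+z)(1+z)), where t₂ = α²+β²+γ², t₃ = α³+β³+γ³. -/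

import Mathlib

open PowerSeries

set_option maxHeartbeats 4000000

def geomAux (F : Type*) [Field F] (r : F) : F⟦X⟧ := PowerSeries.mk fun n => (-r) ^ n

lemma coeff_geomAux (F : Type*) [Field F] (r : F) (n : ℕ) :
    coeff (R := F) n (geomAux F r) = (-r) ^ n := coeff_mk _ _

lemma geomAux_spec (F : Type*) [Field F] (r : F) :
    (1 + C (R := F) r * X) * geomAux F r = 1 := by
  ext n
  rw [add_mul, one_mul, mul_assoc, map_add]
  cases n with
  | zero => simp [geomAux]
  | succ m =>
    rw [PowerSeries.coeff_C_mul, PowerSeries.coeff_succ_X_mul, coeff_geomAux, coeff_geomAux,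
      PowerSeries.coeff_one, if_neg (Nat.succ_ne_zero m)]
    ring

/-- Mkrtchyan's generating function for universal Casimir eigenvalues: with the
    closed-form character sequence x(k), the series
    C(z) = d + ∑_{k≥1} x(k)/(2t)^k · (−z)^{k+1} equals the rational function
    d + z²·(96t³+168t³z+6(14t³+t·t₂−t₃)z²+(13t³+3t·t₂−4t₃)z³)
          /(6(2t+αz)(2t+βz)(2t+γz)(2+z)(1+z)),
    stated as an identity of formal power series after clearing denominators. -/
theorem casimir_generating_function {F : Type*} [Field F] (α β γ : F)
    (hαβ : α ≠ β) (hαγ : α ≠ γ) (hβγ : β ≠ γ)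
    (hα : α ≠ 0) (hβ : β ≠ 0) (hγ : γ ≠ 0)
    (t : F) (ht : t = α + β + γ) (htne : t ≠ 0)
    (h2α : 2 * t - α ≠ 0) (h2β : 2 * t - β ≠ 0) (h2γ : 2 * t - γ ≠ 0)
    (d : F) (hd : d = (α - 2 * t) * (β - 2 * t) * (γ - 2 * t) / (α * β * γ))
    (cα cβ cγ : F)
    (hcα : cα = -(-t ^ 2 * (d - 8) + (2 + d) * β * γ + (3 * d - 4) * t * (β + γ))
        / (2 * d * (α - β) * (α - γ)))
    (hcβ : cβ = -(-t ^ 2 * (d - 8) + (2 + d) * α * γ + (3 * d - 4) * t * (α + γ))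
        / (2 * d * (β - α) * (β - γ)))
    (hcγ : cγ = -(-t ^ 2 * (d - 8) + (2 + d) * β * α + (3 * d - 4) * t * (β + α))
        / (2 * d * (γ - β) * (γ - α)))
    (x : ℕ → F)
    (hx : ∀ k : ℕ, x k =
      -(α * β * γ * (2 * t) ^ k) / ((2 * t - α) * (2 * t - β) * (2 * t - γ))
        + t ^ k / 2 + cα * α ^ k + cβ * β ^ k + cγ * γ ^ k)
    (t₂ t₃ : F) (ht₂ : t₂ = α ^ 2 + β ^ 2 + γ ^ 2)
    (ht₃ : t₃ = α ^ 3 + β ^ 3 + γ ^ 3)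
    (Cz : F⟦X⟧)
    (hCz : Cz = PowerSeries.mk fun n =>
      if n = 0 then d else if n = 1 then 0
      else (-1) ^ n * x (n - 1) / (2 * t) ^ (n - 1)) :
    Cz * ((PowerSeries.C (R := F) 6) * (PowerSeries.C (R := F) (2 * t) + PowerSeries.C (R := F) α * X)
        * (PowerSeries.C (R := F) (2 * t) + PowerSeries.C (R := F) β * X)
        * (PowerSeries.C (R := F) (2 * t) + PowerSeries.C (R := F) γ * X)
        * (PowerSeries.C (R := F) 2 + X) * (1 + X))
      = (PowerSeries.C (R := F) d)
          * ((PowerSeries.C (R := F) 6) * (PowerSeries.C (R := F) (2 * t) + PowerSeries.C (R := F) α * X)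
            * (PowerSeries.C (R := F) (2 * t) + PowerSeries.C (R := F) β * X)
            * (PowerSeries.C (R := F) (2 * t) + PowerSeries.C (R := F) γ * X)
            * (PowerSeries.C (R := F) 2 + X) * (1 + X))
        + X ^ 2 * (PowerSeries.C (R := F) (96 * t ^ 3)
            + PowerSeries.C (R := F) (168 * t ^ 3) * X
            + PowerSeries.C (R := F) (6 * (14 * t ^ 3 + t * t₂ - t₃)) * X ^ 2
            + PowerSeries.C (R := F) (13 * t ^ 3 + 3 * t * t₂ - 4 * t₃) * X ^ 3) := by
  subst ht ht₂ ht₃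
  by_cases h2 : (2 : F) = 0
  · -- characteristic 2
    have h2t : (2*(α+β+γ) : F) = 0 := by rw [h2, zero_mul]
    have hCd : Cz = C (R := F) d := by
      rw [hCz]
      ext n
      rw [coeff_mk, PowerSeries.coeff_C]
      rcases n with _ | _ | m
      · simp
      · simp
      · rw [if_neg (by omega), if_neg (by omega), if_neg (by omega), h2t,
          zero_pow (by omega : m + 2 - 1 ≠ 0), div_zero]
    have n0 : (96*(α+β+γ)^3 : F) = 0 := by linear_combination (48*(α+β+γ)^3) * h2
    have n1 : (168*(α+β+γ)^3 : F) = 0 := by linear_combination (84*(α+β+γ)^3) * h2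
    have n2 : (6*(14*(α+β+γ)^3+(α+β+γ)*(α^2+β^2+γ^2)-(α^3+β^3+γ^3)) : F) = 0 := by
      linear_combination (3*(14*(α+β+γ)^3+(α+β+γ)*(α^2+β^2+γ^2)-(α^3+β^3+γ^3))) * h2
    have n3 : (13*(α+β+γ)^3+3*(α+β+γ)*(α^2+β^2+γ^2)-4*(α^3+β^3+γ^3) : F) = 0 := by
      linear_combination (6*α^3 + 6*β^3 + 6*γ^3
        + 21*(α^2*β + α^2*γ + α*β^2 + α*γ^2 + β^2*γ + β*γ^2) + 39*(α*β*γ)) * h2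
    rw [hCd, n0, n1, n2, n3, map_zero]
    ring
  · -- main case
    have h2t : (2*(α+β+γ) : F) ≠ 0 := mul_ne_zero h2 htne
    have hPP : ((2*(α+β+γ)-α)*(2*(α+β+γ)-β)*(2*(α+β+γ)-γ)) ≠ 0 := mul_ne_zero (mul_ne_zero h2α h2β) h2γ
    have ha2 : α - 2*(α+β+γ) ≠ 0 := fun h => h2α (by linear_combination -h)
    have hb2 : β - 2*(α+β+γ) ≠ 0 := fun h => h2β (by linear_combination -h)
    have hg2 : γ - 2*(α+β+γ) ≠ 0 := fun h => h2γ (by linear_combination -h)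
    have habc : (α*β*γ : F) ≠ 0 := mul_ne_zero (mul_ne_zero hα hβ) hγ
    have hdne : d ≠ 0 := by
      rw [hd]; exact div_ne_zero (mul_ne_zero (mul_ne_zero ha2 hb2) hg2) habc
    have hab : α - β ≠ 0 := sub_ne_zero.mpr hαβ
    have hag : α - γ ≠ 0 := sub_ne_zero.mpr hαγ
    have hbg : β - γ ≠ 0 := sub_ne_zero.mpr hβγ
    have hba : β - α ≠ 0 := sub_ne_zero.mpr (Ne.symm hαβ)
    have hga : γ - α ≠ 0 := sub_ne_zero.mpr (Ne.symm hαγ)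
    have hgb : γ - β ≠ 0 := sub_ne_zero.mpr (Ne.symm hβγ)
    obtain ⟨A, hA⟩ : ∃ a : F, a = -(α*β*γ) / ((2*(α+β+γ)-α)*(2*(α+β+γ)-β)*(2*(α+β+γ)-γ)) := ⟨_, rfl⟩
    have HA : A * ((2*(α+β+γ)-α)*(2*(α+β+γ)-β)*(2*(α+β+γ)-γ)) = -(α*β*γ) := by rw [hA]; exact div_mul_cancel₀ _ hPP
    have Hd : d * (α*β*γ) = ((α-2*(α+β+γ))*(β-2*(α+β+γ))*(γ-2*(α+β+γ))) := by
      rw [hd]; exact div_mul_cancel₀ _ habc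
    have h1a : cα * (2*d*(α-β)*(α-γ)) = -(-(α+β+γ)^2*(d-8) + (2+d)*β*γ + (3*d-4)*(α+β+γ)*(β+γ)) := by
      rw [hcα]
      exact div_mul_cancel₀ _ (mul_ne_zero (mul_ne_zero (mul_ne_zero h2 hdne) hab) hag)
    have h1b : cβ * (2*d*(β-α)*(β-γ)) = -(-(α+β+γ)^2*(d-8) + (2+d)*α*γ + (3*d-4)*(α+β+γ)*(α+γ)) := by
      rw [hcβ]
      exact div_mul_cancel₀ _ (mul_ne_zero (mul_ne_zero (mul_ne_zero h2 hdne) hba) hbg)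
    have h1g : cγ * (2*d*(γ-β)*(γ-α)) = -(-(α+β+γ)^2*(d-8) + (2+d)*β*α + (3*d-4)*(α+β+γ)*(β+α)) := by
      rw [hcγ]
      exact div_mul_cancel₀ _ (mul_ne_zero (mul_ne_zero (mul_ne_zero h2 hdne) hgb) hga)
    have Hca : cα * (2*((2*(α+β+γ)-α)*(2*(α+β+γ)-β)*(2*(α+β+γ)-γ))*(α-β)*(α-γ)) = (-(α+β+γ)^2*(((α-2*(α+β+γ))*(β-2*(α+β+γ))*(γ-2*(α+β+γ)))-8*(α*β*γ)) + (2*(α*β*γ)+((α-2*(α+β+γ))*(β-2*(α+β+γ))*(γ-2*(α+β+γ))))*β*γ + (3*((α-2*(α+β+γ))*(β-2*(α+β+γ))*(γ-2*(α+β+γ)))-4*(α*β*γ))*(α+β+γ)*(β+γ)) := by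
      linear_combination (-(α*β*γ)) * h1a
        + (2*cα*(α-β)*(α-γ) + (-(α+β+γ)^2 + β*γ + 3*(α+β+γ)*(β+γ))) * Hd
    have Hcb : cβ * (2*((2*(α+β+γ)-α)*(2*(α+β+γ)-β)*(2*(α+β+γ)-γ))*(β-α)*(β-γ)) = (-(α+β+γ)^2*(((α-2*(α+β+γ))*(β-2*(α+β+γ))*(γ-2*(α+β+γ)))-8*(α*β*γ)) + (2*(α*β*γ)+((α-2*(α+β+γ))*(β-2*(α+β+γ))*(γ-2*(α+β+γ))))*α*γ + (3*((α-2*(α+β+γ))*(β-2*(α+β+γ))*(γ-2*(α+β+γ)))-4*(α*β*γ))*(α+β+γ)*(α+γ)) := by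
      linear_combination (-(α*β*γ)) * h1b
        + (2*cβ*(β-α)*(β-γ) + (-(α+β+γ)^2 + α*γ + 3*(α+β+γ)*(α+γ))) * Hd
    have Hcg : cγ * (2*((2*(α+β+γ)-α)*(2*(α+β+γ)-β)*(2*(α+β+γ)-γ))*(γ-β)*(γ-α)) = (-(α+β+γ)^2*(((α-2*(α+β+γ))*(β-2*(α+β+γ))*(γ-2*(α+β+γ)))-8*(α*β*γ)) + (2*(α*β*γ)+((α-2*(α+β+γ))*(β-2*(α+β+γ))*(γ-2*(α+β+γ))))*β*α + (3*((α-2*(α+β+γ))*(β-2*(α+β+γ))*(γ-2*(α+β+γ)))-4*(α*β*γ))*(α+β+γ)*(β+α)) := by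
      linear_combination (-(α*β*γ)) * h1g
        + (2*cγ*(γ-β)*(γ-α) + (-(α+β+γ)^2 + β*α + 3*(α+β+γ)*(β+α))) * Hd
    have hMulne : (2*((2*(α+β+γ)-α)*(2*(α+β+γ)-β)*(2*(α+β+γ)-γ))*(α-β)*(α-γ)*(β-γ)) ≠ 0 :=
      mul_ne_zero (mul_ne_zero (mul_ne_zero (mul_ne_zero h2 hPP) hab) hag) hbg
    obtain ⟨hf, hh⟩ : ∃ a : F, a = (2:F)⁻¹ := ⟨_, rfl⟩
    have h2h : 2 * hf = 1 := by rw [hh]; exact mul_inv_cancel₀ h2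
    have hx0 : A + hf + cα + cβ + cγ = 0 := by
      have H : (A + hf + cα + cβ + cγ) * (2*((2*(α+β+γ)-α)*(2*(α+β+γ)-β)*(2*(α+β+γ)-γ))*(α-β)*(α-γ)*(β-γ)) = 0 := by
        linear_combination ((β-γ)) * Hca + ((-(α-γ))) * Hcb + ((α-β)) * Hcg
          + (2*(α-β)*(α-γ)*(β-γ)) * HA + (((2*(α+β+γ)-α)*(2*(α+β+γ)-β)*(2*(α+β+γ)-γ))*(α-β)*(α-γ)*(β-γ)) * h2h
      exact (mul_eq_zero.mp H).resolve_right hMulne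
    have s0 : (12*cγ*(2*(α+β+γ))^3 + 12*cβ*(2*(α+β+γ))^3 + 12*cα*(2*(α+β+γ))^3 + 12*hf*(2*(α+β+γ))^3 + 12*A*(2*(α+β+γ))^3 : F) = 0 := by linear_combination (12*(2*(α+β+γ))^3) * hx0
    have s1 : (12*cγ*(2*(α+β+γ))^2*β + 12*cγ*(2*(α+β+γ))^2*α + 18*cγ*(2*(α+β+γ))^3 + 12*cβ*(2*(α+β+γ))^2*γ + 12*cβ*(2*(α+β+γ))^2*α + 18*cβ*(2*(α+β+γ))^3 + 12*cα*(2*(α+β+γ))^2*γ + 12*cα*(2*(α+β+γ))^2*β + 18*cα*(2*(α+β+γ))^3 + 12*hf*(2*(α+β+γ))^2*γ + 12*hf*(2*(α+β+γ))^2*β + 12*hf*(2*(α+β+γ))^2*α + 12*hf*(2*(α+β+γ))^3 + 12*A*(2*(α+β+γ))^2*γ + 12*A*(2*(α+β+γ))^2*β + 12*A*(2*(α+β+γ))^2*α + 6*A*(2*(α+β+γ))^3 : F) = -(96*(α+β+γ)^3) := mul_right_cancel₀ hMulne (by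
      linear_combination ((12*(2*(α+β+γ))^2*γ+12*(2*(α+β+γ))^2*β+18*(2*(α+β+γ))^3)*(β-γ)) * Hca + ((12*(2*(α+β+γ))^2*γ+12*(2*(α+β+γ))^2*α+18*(2*(α+β+γ))^3)*(-(α-γ))) * Hcb + ((12*(2*(α+β+γ))^2*β+12*(2*(α+β+γ))^2*α+18*(2*(α+β+γ))^3)*(α-β)) * Hcg + ((12*(2*(α+β+γ))^2*γ+12*(2*(α+β+γ))^2*β+12*(2*(α+β+γ))^2*α+6*(2*(α+β+γ))^3)*2*(α-β)*(α-γ)*(β-γ)) * HA + ((6*(2*(α+β+γ))^2*γ+6*(2*(α+β+γ))^2*β+6*(2*(α+β+γ))^2*α+6*(2*(α+β+γ))^3)*(2*((2*(α+β+γ)-α)*(2*(α+β+γ)-β)*(2*(α+β+γ)-γ))*(α-β)*(α-γ)*(β-γ))) * h2h)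
    have s2 : (12*cγ*(2*(α+β+γ))*α*β + 18*cγ*(2*(α+β+γ))^2*β + 18*cγ*(2*(α+β+γ))^2*α + 6*cγ*(2*(α+β+γ))^3 + 12*cβ*(2*(α+β+γ))*α*γ + 18*cβ*(2*(α+β+γ))^2*γ + 18*cβ*(2*(α+β+γ))^2*α + 6*cβ*(2*(α+β+γ))^3 + 12*cα*(2*(α+β+γ))*β*γ + 18*cα*(2*(α+β+γ))^2*γ + 18*cα*(2*(α+β+γ))^2*β + 6*cα*(2*(α+β+γ))^3 + 12*hf*(2*(α+β+γ))*β*γ + 12*hf*(2*(α+β+γ))*α*γ + 12*hf*(2*(α+β+γ))*α*β + 12*hf*(2*(α+β+γ))^2*γ + 12*hf*(2*(α+β+γ))^2*β + 12*hf*(2*(α+β+γ))^2*α + 12*A*(2*(α+β+γ))*β*γ + 12*A*(2*(α+β+γ))*α*γ + 12*A*(2*(α+β+γ))*α*β + 6*A*(2*(α+β+γ))^2*γ + 6*A*(2*(α+β+γ))^2*β + 6*A*(2*(α+β+γ))^2*α : F) = -(168*(α+β+γ)^3) := mul_right_cancel₀ hMulne (by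
      linear_combination ((12*(2*(α+β+γ))*β*γ+18*(2*(α+β+γ))^2*γ+18*(2*(α+β+γ))^2*β+6*(2*(α+β+γ))^3)*(β-γ)) * Hca + ((12*(2*(α+β+γ))*α*γ+18*(2*(α+β+γ))^2*γ+18*(2*(α+β+γ))^2*α+6*(2*(α+β+γ))^3)*(-(α-γ))) * Hcb + ((12*(2*(α+β+γ))*α*β+18*(2*(α+β+γ))^2*β+18*(2*(α+β+γ))^2*α+6*(2*(α+β+γ))^3)*(α-β)) * Hcg + ((12*(2*(α+β+γ))*β*γ+12*(2*(α+β+γ))*α*γ+12*(2*(α+β+γ))*α*β+6*(2*(α+β+γ))^2*γ+6*(2*(α+β+γ))^2*β+6*(2*(α+β+γ))^2*α)*2*(α-β)*(α-γ)*(β-γ)) * HA + ((6*(2*(α+β+γ))*β*γ+6*(2*(α+β+γ))*α*γ+6*(2*(α+β+γ))*α*β+6*(2*(α+β+γ))^2*γ+6*(2*(α+β+γ))^2*β+6*(2*(α+β+γ))^2*α)*(2*((2*(α+β+γ)-α)*(2*(α+β+γ)-β)*(2*(α+β+γ)-γ))*(α-β)*(α-γ)*(β-γ))) * h2h)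
    have s3 : (18*cγ*(2*(α+β+γ))*α*β + 6*cγ*(2*(α+β+γ))^2*β + 6*cγ*(2*(α+β+γ))^2*α + 18*cβ*(2*(α+β+γ))*α*γ + 6*cβ*(2*(α+β+γ))^2*γ + 6*cβ*(2*(α+β+γ))^2*α + 18*cα*(2*(α+β+γ))*β*γ + 6*cα*(2*(α+β+γ))^2*γ + 6*cα*(2*(α+β+γ))^2*β + 12*hf*α*β*γ + 12*hf*(2*(α+β+γ))*β*γ + 12*hf*(2*(α+β+γ))*α*γ + 12*hf*(2*(α+β+γ))*α*β + 12*A*α*β*γ + 6*A*(2*(α+β+γ))*β*γ + 6*A*(2*(α+β+γ))*α*γ + 6*A*(2*(α+β+γ))*α*β : F) = -(6*(14*(α+β+γ)^3+(α+β+γ)*(α^2+β^2+γ^2)-(α^3+β^3+γ^3))) := mul_right_cancel₀ hMulne (by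
      linear_combination ((18*(2*(α+β+γ))*β*γ+6*(2*(α+β+γ))^2*γ+6*(2*(α+β+γ))^2*β)*(β-γ)) * Hca + ((18*(2*(α+β+γ))*α*γ+6*(2*(α+β+γ))^2*γ+6*(2*(α+β+γ))^2*α)*(-(α-γ))) * Hcb + ((18*(2*(α+β+γ))*α*β+6*(2*(α+β+γ))^2*β+6*(2*(α+β+γ))^2*α)*(α-β)) * Hcg + ((12*α*β*γ+6*(2*(α+β+γ))*β*γ+6*(2*(α+β+γ))*α*γ+6*(2*(α+β+γ))*α*β)*2*(α-β)*(α-γ)*(β-γ)) * HA + ((6*α*β*γ+6*(2*(α+β+γ))*β*γ+6*(2*(α+β+γ))*α*γ+6*(2*(α+β+γ))*α*β)*(2*((2*(α+β+γ)-α)*(2*(α+β+γ)-β)*(2*(α+β+γ)-γ))*(α-β)*(α-γ)*(β-γ))) * h2h)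
    have s4 : (6*cγ*(2*(α+β+γ))*α*β + 6*cβ*(2*(α+β+γ))*α*γ + 6*cα*(2*(α+β+γ))*β*γ + 12*hf*α*β*γ + 6*A*α*β*γ : F) = -(13*(α+β+γ)^3+3*(α+β+γ)*(α^2+β^2+γ^2)-4*(α^3+β^3+γ^3)) := mul_right_cancel₀ hMulne (by
      linear_combination ((6*(2*(α+β+γ))*β*γ)*(β-γ)) * Hca + ((6*(2*(α+β+γ))*α*γ)*(-(α-γ))) * Hcb + ((6*(2*(α+β+γ))*α*β)*(α-β)) * Hcg + ((6*α*β*γ)*2*(α-β)*(α-γ)*(β-γ)) * HA + ((6*α*β*γ)*(2*((2*(α+β+γ)-α)*(2*(α+β+γ)-β)*(2*(α+β+γ)-γ))*(α-β)*(α-γ)*(β-γ))) * h2h)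
    -- decomposition of Cz into geometric series
    have hM : Cz = C (R := F) d - X * (PowerSeries.C (R := F) A * geomAux F 1 + PowerSeries.C (R := F) hf * geomAux F (2:F)⁻¹ + PowerSeries.C (R := F) cα * geomAux F (α/(2*(α+β+γ))) + PowerSeries.C (R := F) cβ * geomAux F (β/(2*(α+β+γ))) + PowerSeries.C (R := F) cγ * geomAux F (γ/(2*(α+β+γ)))) := by
      rw [hCz]
      ext n
      rw [coeff_mk]
      rcases n with _ | _ | m
      · simp
      · have hc : (coeff (R := F) 1) (X * (PowerSeries.C (R := F) A * geomAux F 1 + PowerSeries.C (R := F) hf * geomAux F (2:F)⁻¹ + PowerSeries.C (R := F) cα * geomAux F (α/(2*(α+β+γ))) + PowerSeries.C (R := F) cβ * geomAux F (β/(2*(α+β+γ))) + PowerSeries.C (R := F) cγ * geomAux F (γ/(2*(α+β+γ))))) = A + hf + cα + cβ + cγ := by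
          rw [show (coeff (R := F) 1) = coeff (0 + 1) from rfl, PowerSeries.coeff_succ_X_mul]
          simp only [map_add, PowerSeries.coeff_C_mul, coeff_geomAux, pow_zero, mul_one]
        norm_num [map_sub, PowerSeries.coeff_C, hc]
        linear_combination hx0
      · have hc : (coeff (R := F) (m+2)) (X * (PowerSeries.C (R := F) A * geomAux F 1 + PowerSeries.C (R := F) hf * geomAux F (2:F)⁻¹ + PowerSeries.C (R := F) cα * geomAux F (α/(2*(α+β+γ))) + PowerSeries.C (R := F) cβ * geomAux F (β/(2*(α+β+γ))) + PowerSeries.C (R := F) cγ * geomAux F (γ/(2*(α+β+γ)))))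
            = A * (-1:F)^(m+1) + hf * (-(2:F)⁻¹)^(m+1)
              + cα * (-(α/(2*(α+β+γ))))^(m+1) + cβ * (-(β/(2*(α+β+γ))))^(m+1)
              + cγ * (-(γ/(2*(α+β+γ))))^(m+1) := by
          rw [show m+2 = (m+1)+1 from rfl, PowerSeries.coeff_succ_X_mul]
          simp only [map_add, PowerSeries.coeff_C_mul, coeff_geomAux]
        have hup : ((2*(α+β+γ) : F))^(m+1) ≠ 0 := pow_ne_zero _ h2t
        have hxK : x (m+1) = A * (2*(α+β+γ))^(m+1) + hf * (α+β+γ)^(m+1)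
            + cα * α^(m+1) + cβ * β^(m+1) + cγ * γ^(m+1) := by
          have r1 : -(α*β*γ*(2*(α+β+γ))^(m+1)) / ((2*(α+β+γ)-α)*(2*(α+β+γ)-β)*(2*(α+β+γ)-γ))
              = A * (2*(α+β+γ))^(m+1) := by rw [hA]; ring
          have r2 : ((α+β+γ):F)^(m+1)/2 = hf * (α+β+γ)^(m+1) := by rw [hh]; ring
          rw [hx (m+1), r1, r2]
        have q1 : ((2:F)⁻¹)^(m+1) * (2*(α+β+γ))^(m+1) = ((α+β+γ):F)^(m+1) := by
          rw [← mul_pow, ← mul_assoc, inv_mul_cancel₀ h2, one_mul]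
        have q2 : (α/(2*(α+β+γ)))^(m+1) * (2*(α+β+γ))^(m+1) = α^(m+1) := by
          rw [div_pow]; exact div_mul_cancel₀ _ hup
        have q3 : (β/(2*(α+β+γ)))^(m+1) * (2*(α+β+γ))^(m+1) = β^(m+1) := by
          rw [div_pow]; exact div_mul_cancel₀ _ hup
        have q4 : (γ/(2*(α+β+γ)))^(m+1) * (2*(α+β+γ))^(m+1) = γ^(m+1) := by
          rw [div_pow]; exact div_mul_cancel₀ _ hup
        have main : x (m+1) = (A + hf * ((2:F)⁻¹)^(m+1) + cα * (α/(2*(α+β+γ)))^(m+1)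
            + cβ * (β/(2*(α+β+γ)))^(m+1) + cγ * (γ/(2*(α+β+γ)))^(m+1)) * (2*(α+β+γ))^(m+1) := by
          rw [hxK, add_mul, add_mul, add_mul, add_mul, mul_assoc, mul_assoc, mul_assoc,
            mul_assoc, q1, q2, q3, q4]
        norm_num [map_sub, PowerSeries.coeff_C, hc]
        rw [main, mul_div_assoc,
          mul_div_cancel_right₀ _ hup, neg_pow (2:F)⁻¹, neg_pow (α/(2*(α+β+γ))),
          neg_pow (β/(2*(α+β+γ))), neg_pow (γ/(2*(α+β+γ))),
          show ((-1:F))^(m+2) = (-1:F)^(m+1) * (-1) from pow_succ (-1) (m+1)]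
        generalize ((-1:F))^(m+1) = w
        ring
    -- geometric cancellations
    have g1 : (1 + X) * geomAux F 1 = 1 := by simpa using geomAux_spec F 1
    have g2 : (C (R := F) 2 + X) * geomAux F (2:F)⁻¹ = C (R := F) 2 := by
      have hfac : (C (R := F) 2 + X : F⟦X⟧) = C (R := F) 2 * (1 + C (R := F) (2:F)⁻¹ * X) := by
        rw [mul_add, mul_one, ← mul_assoc, ← map_mul, mul_inv_cancel₀ h2, map_one, one_mul]
      rw [hfac, mul_assoc, geomAux_spec, mul_one]
    have g3 : (C (R := F) (2*(α+β+γ)) + C (R := F) α * X) * geomAux F (α/(2*(α+β+γ))) = C (R := F) (2*(α+β+γ)) := by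
      have hfac : (C (R := F) (2*(α+β+γ)) + C (R := F) α * X : F⟦X⟧)
          = C (R := F) (2*(α+β+γ)) * (1 + C (R := F) (α/(2*(α+β+γ))) * X) := by
        have hv : (2*(α+β+γ) : F) * (α/(2*(α+β+γ))) = α := by
          rw [mul_div_assoc', mul_comm, mul_div_assoc, div_self h2t, mul_one]
        conv_rhs => rw [mul_add, mul_one, ← mul_assoc, ← map_mul, hv]
      rw [hfac, mul_assoc, geomAux_spec, mul_one]
    have g4 : (C (R := F) (2*(α+β+γ)) + C (R := F) β * X) * geomAux F (β/(2*(α+β+γ))) = C (R := F) (2*(α+β+γ)) := by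
      have hfac : (C (R := F) (2*(α+β+γ)) + C (R := F) β * X : F⟦X⟧)
          = C (R := F) (2*(α+β+γ)) * (1 + C (R := F) (β/(2*(α+β+γ))) * X) := by
        have hv : (2*(α+β+γ) : F) * (β/(2*(α+β+γ))) = β := by
          rw [mul_div_assoc', mul_comm, mul_div_assoc, div_self h2t, mul_one]
        conv_rhs => rw [mul_add, mul_one, ← mul_assoc, ← map_mul, hv]
      rw [hfac, mul_assoc, geomAux_spec, mul_one]
    have g5 : (C (R := F) (2*(α+β+γ)) + C (R := F) γ * X) * geomAux F (γ/(2*(α+β+γ))) = C (R := F) (2*(α+β+γ)) := by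
      have hfac : (C (R := F) (2*(α+β+γ)) + C (R := F) γ * X : F⟦X⟧)
          = C (R := F) (2*(α+β+γ)) * (1 + C (R := F) (γ/(2*(α+β+γ))) * X) := by
        have hv : (2*(α+β+γ) : F) * (γ/(2*(α+β+γ))) = γ := by
          rw [mul_div_assoc', mul_comm, mul_div_assoc, div_self h2t, mul_one]
        conv_rhs => rw [mul_add, mul_one, ← mul_assoc, ← map_mul, hv]
      rw [hfac, mul_assoc, geomAux_spec, mul_one]
    have hMD : (PowerSeries.C (R := F) A * geomAux F 1 + PowerSeries.C (R := F) hf * geomAux F (2:F)⁻¹ + PowerSeries.C (R := F) cα * geomAux F (α/(2*(α+β+γ))) + PowerSeries.C (R := F) cβ * geomAux F (β/(2*(α+β+γ))) + PowerSeries.C (R := F) cγ * geomAux F (γ/(2*(α+β+γ)))) * (PowerSeries.C (R := F) 6 * (PowerSeries.C (R := F) (2*(α+β+γ)) + PowerSeries.C (R := F) α * X) * (PowerSeries.C (R := F) (2*(α+β+γ)) + PowerSeries.C (R := F) β * X) * (PowerSeries.C (R := F) (2*(α+β+γ)) + PowerSeries.C (R := F) γ * X) * (PowerSeries.C (R :=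 F) 2 + X) * (1 + X)) = PowerSeries.C (R := F) 6 * (PowerSeries.C (R := F) A * ((PowerSeries.C (R := F) (2*(α+β+γ)) + PowerSeries.C (R := F) α * X)*(PowerSeries.C (R := F) (2*(α+β+γ)) + PowerSeries.C (R := F) β * X)*(PowerSeries.C (R := F) (2*(α+β+γ)) + PowerSeries.C (R := F) γ * X)*(PowerSeries.C (R := F) 2+X)) + PowerSeries.C (R := F) hf * (PowerSeries.C (R := F) 2 * ((PowerSeries.C (R := F) (2*(α+β+γ)) + PowerSeries.C (R := F) α * X)*(PowerSeries.C (R := F) (2*(α+β+γ)) + PowerSeries.C (R := F) β * X)*(PowerSeries.C (R := F) (2*(α+β+γ)) + PowerSeries.C (R := F) γ * X)*(1+X))) + PowerSeries.C (R := F) cα * (PowerSeries.C (R := F) (2*(α+β+γ)) * ((PowerSeries.C (R := F) (2*(α+β+γ)) + PowerSeries.C (R := F) β * X)*(PowerSeries.C (R := F) (2*(α+β+γ)) + PowerSeries.C (R := F) γ * X)*(PowerSeries.C (R := F) 2+X)*(1+X))) + PowerSeries.C (R := F) cβ * (PowerSeries.C (R := F) (2*(α+β+γ)) * ((PowerSeries.C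 (R := F) (2*(α+β+γ)) + PowerSeries.C (R := F) α * X)*(PowerSeries.C (R := F) (2*(α+β+γ)) + PowerSeries.C (R := F) γ * X)*(PowerSeries.C (R := F) 2+X)*(1+X))) + PowerSeries.C (R := F) cγ * (PowerSeries.C (R := F) (2*(α+β+γ)) * ((PowerSeries.C (R := F) (2*(α+β+γ)) + PowerSeries.C (R := F) α * X)*(PowerSeries.C (R := F) (2*(α+β+γ)) + PowerSeries.C (R := F) β * X)*(PowerSeries.C (R := F) 2+X)*(1+X)))) := by
      linear_combination (PowerSeries.C (R := F) 6 * PowerSeries.C (R := F) A * ((PowerSeries.C (R := F) (2*(α+β+γ)) + PowerSeries.C (R := F) α * X)*(PowerSeries.C (R := F) (2*(α+β+γ)) + PowerSeries.C (R := F) β * X)*(PowerSeries.C (R := F) (2*(α+β+γ)) + PowerSeries.C (R := F) γ * X)*(PowerSeries.C (R := F) 2+X))) * g1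
        + (PowerSeries.C (R := F) 6 * PowerSeries.C (R := F) hf * ((PowerSeries.C (R := F) (2*(α+β+γ)) + PowerSeries.C (R := F) α * X)*(PowerSeries.C (R := F) (2*(α+β+γ)) + PowerSeries.C (R := F) β * X)*(PowerSeries.C (R := F) (2*(α+β+γ)) + PowerSeries.C (R := F) γ * X)*(1+X))) * g2
        + (PowerSeries.C (R := F) 6 * PowerSeries.C (R := F) cα * ((PowerSeries.C (R := F) (2*(α+β+γ)) + PowerSeries.C (R := F) β * X)*(PowerSeries.C (R := F) (2*(α+β+γ)) + PowerSeries.C (R := F) γ * X)*(PowerSeries.C (R := F) 2+X)*(1+X))) * g3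
        + (PowerSeries.C (R := F) 6 * PowerSeries.C (R := F) cβ * ((PowerSeries.C (R := F) (2*(α+β+γ)) + PowerSeries.C (R := F) α * X)*(PowerSeries.C (R := F) (2*(α+β+γ)) + PowerSeries.C (R := F) γ * X)*(PowerSeries.C (R := F) 2+X)*(1+X))) * g4
        + (PowerSeries.C (R := F) 6 * PowerSeries.C (R := F) cγ * ((PowerSeries.C (R := F) (2*(α+β+γ)) + PowerSeries.C (R := F) α * X)*(PowerSeries.C (R := F) (2*(α+β+γ)) + PowerSeries.C (R := F) β * X)*(PowerSeries.C (R := F) 2+X)*(1+X))) * g5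
    have key : PowerSeries.C (R := F) 6 * (PowerSeries.C (R := F) A * ((PowerSeries.C (R := F) (2*(α+β+γ)) + PowerSeries.C (R := F) α * X)*(PowerSeries.C (R := F) (2*(α+β+γ)) + PowerSeries.C (R := F) β * X)*(PowerSeries.C (R := F) (2*(α+β+γ)) + PowerSeries.C (R := F) γ * X)*(PowerSeries.C (R := F) 2+X)) + PowerSeries.C (R := F) hf * (PowerSeries.C (R := F) 2 * ((PowerSeries.C (R := F) (2*(α+β+γ)) + PowerSeries.C (R := F) α * X)*(PowerSeries.C (R := F) (2*(α+β+γ)) + PowerSeries.C (R := F) β * X)*(PowerSeries.C (R := F) (2*(α+β+γ)) + PowerSeries.C (R := F) γ * X)*(1+X))) + PowerSeries.C (R := F) cα * (PowerSeries.C (R := F) (2*(α+β+γ)) * ((PowerSeries.C (R := F) (2*(α+β+γ)) + PowerSeries.C (R := F) β * X)*(PowerSeries.C (R := F) (2*(α+β+γ)) + PowerSeries.C (R := F) γ * X)*(PowerSeries.C (R := F) 2+X)*(1+X))) + PowerSeries.C (R := F) cβ * (PowerSeries.C (R := F) (2*(α+β+γ)) * ((PowerSeries.C (R := F) (2*(α+β+γ))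 + PowerSeries.C (R := F) α * X)*(PowerSeries.C (R := F) (2*(α+β+γ)) + PowerSeries.C (R := F) γ * X)*(PowerSeries.C (R := F) 2+X)*(1+X))) + PowerSeries.C (R := F) cγ * (PowerSeries.C (R := F) (2*(α+β+γ)) * ((PowerSeries.C (R := F) (2*(α+β+γ)) + PowerSeries.C (R := F) α * X)*(PowerSeries.C (R := F) (2*(α+β+γ)) + PowerSeries.C (R := F) β * X)*(PowerSeries.C (R := F) 2+X)*(1+X)))) = -(X * (PowerSeries.C (R := F) (96*(α+β+γ)^3) + PowerSeries.C (R := F) (168*(α+β+γ)^3) * X + PowerSeries.C (R := F) (6*(14*(α+β+γ)^3+(α+β+γ)*(α^2+β^2+γ^2)-(α^3+β^3+γ^3))) * X^2 + PowerSeries.C (R := F) (13*(α+β+γ)^3+3*(α+β+γ)*(α^2+β^2+γ^2)-4*(α^3+β^3+γ^3)) * X^3)) := by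
      have S0 := congrArg (C (R := F)) s0
      have S1 := congrArg (C (R := F)) s1
      have S2 := congrArg (C (R := F)) s2
      have S3 := congrArg (C (R := F)) s3
      have S4 := congrArg (C (R := F)) s4
      simp only [map_mul, map_add, map_sub, map_neg, map_pow, map_ofNat, map_one,
        map_zero] at S0 S1 S2 S3 S4 ⊢
      linear_combination S0 + S1 * X + S2 * X^2 + S3 * X^3 + S4 * X^4
    rw [hM]
    linear_combination (-X) * hMD + (-X) * key
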